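/- Fix reals s with 0 < s ≤ 1 and p > 0. Let aᵢ, aᵢ⁺⁺ : ℝ → ℝ (i ∈ {1,2,3}, indices cyclic mod 3) be a trajectory of the source-free oscillator dynamics (aᵢ' = p·aᵢ₋₁(aᵢ + aᵢ⁺⁺) − p·aᵢ(aᵢ₊₁ + aᵢ₊₁⁺⁺), (aᵢ⁺⁺)' = aᵢ² − s·aᵢ⁺⁺, aᵢ > 0, a₁+a₂+a₃ ≡ s, 0 ≤ aᵢ⁺⁺ ≤ aᵢ). Define κᵢ = s·aᵢ⁺⁺/aᵢ − aᵢ, κ = √(Σκᵢ²), δᵢ = aᵢ − aᵢ₋₁, δ = √(Σδᵢ²), and η = √(ln(s³/27) − ln(a₁a₂a₃)). Then at every time t with δ(t) ≤ s/12 and η(t) > 0, the function η is differentiable at t and η'(t) ≥ (p·s/9)·η(t) − (p/2)·κ(t). -/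

import Mathlib

/-!
Put `uᵢ = 3aᵢ/s - 1`. Then `Σ uᵢ = 0`, `η² = -Σ log (1 + uᵢ)` and `s² Σ uᵢ² = 3δ²`, and
`δ ≤ s/12` forces `|uᵢ| ≤ 1/6`. On that range `u - 3u²/4 ≤ log (1 + u) ≤ u - u²/3`, so
`δ² ≤ s²η² ≤ 9δ²/4`. Along the dynamics `φ' = -(p/s)(Σ δᵢκᵢ + δ²/2)`, so
`η' = (p/(2sη))(Σ δᵢκᵢ + δ²/2)`; Cauchy–Schwarz gives `Σ δᵢκᵢ ≥ -δκ`, and the two bounds on `δ`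
turn this into `η' ≥ (ps/9)η - (p/2)κ`.
-/

open Finset Real

lemma log_one_add_bounds {u : ℝ} (hu : |u| ≤ 1 / 6) :
    u - 3 / 4 * u ^ 2 ≤ log (1 + u) ∧ log (1 + u) ≤ u - u ^ 2 / 3 := by
  -- third-order Taylor expansion; on `|u| ≤ 1/6` its remainder is at most `u²/30`
  have hT := abs_log_sub_add_sum_range_le (x := -u) (by rw [abs_neg]; linarith) 3
  simp only [sum_range_succ, sum_range_zero, abs_neg, sub_neg_eq_add] at hT
  norm_num at hT
  have h1 : 0 < 1 - |u| := by linarith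
  have hrem : |u| ^ 4 / (1 - |u|) ≤ u ^ 2 / 30 := by
    rw [div_le_iff₀ h1]
    have : |u| ^ 4 = u ^ 2 * |u| ^ 2 := by rw [← sq_abs u]; ring
    nlinarith [abs_nonneg u, sq_nonneg u, mul_nonneg (sq_nonneg u) (abs_nonneg u)]
  have hcube : |u ^ 3| ≤ u ^ 2 / 6 := by
    rw [abs_pow, pow_succ, ← sq_abs u]
    nlinarith [abs_nonneg u, sq_nonneg |u|]
  obtain ⟨hT1, hT2⟩ := abs_le.mp (hT.trans hrem)
  obtain ⟨hc1, hc2⟩ := abs_le.mp hcube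
  constructor <;> nlinarith [sq_nonneg u]

lemma neg_sum_log_one_add_bounds {ι : Type*} [Fintype ι] (u : ι → ℝ) (hsum : ∑ i, u i = 0)
    (hu : ∀ i, |u i| ≤ 1 / 6) :
    (∑ i, u i ^ 2) / 3 ≤ -∑ i, log (1 + u i) ∧ -∑ i, log (1 + u i) ≤ 3 / 4 * ∑ i, u i ^ 2 := by
  have hup : ∑ i, log (1 + u i) ≤ ∑ i, (u i - u i ^ 2 / 3) :=
    sum_le_sum fun i _ => (log_one_add_bounds (hu i)).2
  have hlo : ∑ i, (u i - 3 / 4 * u i ^ 2) ≤ ∑ i, log (1 + u i) :=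
    sum_le_sum fun i _ => (log_one_add_bounds (hu i)).1
  rw [sum_sub_distrib, hsum, ← sum_div] at hup
  rw [sum_sub_distrib, hsum, ← mul_sum] at hlo
  constructor <;> linarith

lemma neg_mul_sqrt_le_sum_mul {ι : Type*} (s : Finset ι) (f g : ι → ℝ) :
    -(√(∑ i ∈ s, f i ^ 2) * √(∑ i ∈ s, g i ^ 2)) ≤ ∑ i ∈ s, f i * g i := by
  have := sum_mul_le_sqrt_mul_sqrt s (fun i => -f i) g
  simp only [neg_mul, sum_neg_distrib, neg_sq] at this
  linarith

lemma abs_le_sqrt_sum_sq {ι : Type*} [Fintype ι] (f : ι → ℝ) (j : ι) :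
    |f j| ≤ √(∑ i, f i ^ 2) :=
  abs_le_sqrt (single_le_sum (fun i _ => sq_nonneg (f i)) (mem_univ j))

lemma sum_zmod_three (f : ZMod 3 → ℝ) : ∑ i, f i = f 0 + f 1 + f 2 :=
  Fin.sum_univ_three f

lemma log_amgm_gap_bounds {s : ℝ} (hs : 0 < s) {x : ZMod 3 → ℝ} (hx : ∀ i, 0 < x i)
    (hsum : x 0 + x 1 + x 2 = s) (hδ : √(∑ i, (x i - x (i - 1)) ^ 2) ≤ s / 12) :
    ∑ i, (x i - x (i - 1)) ^ 2 ≤ s ^ 2 * (log (s ^ 3 / 27) - log (x 0 * x 1 * x 2)) ∧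
      s ^ 2 * (log (s ^ 3 / 27) - log (x 0 * x 1 * x 2)) ≤ 9 / 4 * ∑ i, (x i - x (i - 1)) ^ 2 := by
  set u : ZMod 3 → ℝ := fun i => (3 * x i - s) / s with hu_def
  have hsu : ∀ i, s * u i = 3 * x i - s := fun i => mul_div_cancel₀ _ hs.ne'
  have hu_sum : ∑ i, u i = 0 := by
    rw [sum_zmod_three, ← mul_left_cancel_iff_of_pos hs, mul_zero, mul_add, mul_add, hsu, hsu, hsu]
    linarith
  have hu_abs : ∀ i, |u i| ≤ 1 / 6 := by
    intro i
    have hcyc : 3 * x i - s = (x i - x (i - 1)) - (x (i + 1) - x (i + 1 - 1)) := by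
      rw [add_sub_cancel_right]
      fin_cases i
      · change 3 * x 0 - s = x 0 - x 2 - (x 1 - x 0); linarith
      · change 3 * x 1 - s = x 1 - x 0 - (x 2 - x 1); linarith
      · change 3 * x 2 - s = x 2 - x 1 - (x 0 - x 2); linarith
    have hδi := abs_le_sqrt_sum_sq (fun j => x j - x (j - 1)) i
    have hδi' := abs_le_sqrt_sum_sq (fun j => x j - x (j - 1)) (i + 1)
    rw [hu_def, abs_div, abs_of_pos hs, div_le_iff₀ hs, hcyc]
    linarith [abs_sub (x i - x (i - 1)) (x (i + 1) - x (i + 1 - 1))]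
  have hlog : log (s ^ 3 / 27) - log (x 0 * x 1 * x 2) = -∑ i, log (1 + u i) := by
    have h1u : ∀ i, 1 + u i = x i / (s / 3) := by
      intro i; rw [hu_def]; field_simp; ring
    have hs3 : s ^ 3 / 27 = (s / 3) ^ 3 := by ring
    rw [sum_zmod_three, h1u, h1u, h1u, hs3, log_pow, log_mul (mul_pos (hx 0) (hx 1)).ne' (hx 2).ne',
      log_mul (hx 0).ne' (hx 1).ne']
    simp only [log_div (hx _).ne' (div_ne_zero hs.ne' three_ne_zero)]
    push_cast; ring
  have hsq : s ^ 2 * ∑ i, u i ^ 2 = 3 * ∑ i, (x i - x (i - 1)) ^ 2 := by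
    simp only [mul_sum, ← mul_pow, hsu]
    rw [sum_zmod_three, sum_zmod_three]
    change (3 * x 0 - s) ^ 2 + (3 * x 1 - s) ^ 2 + (3 * x 2 - s) ^ 2
      = 3 * (x 0 - x 2) ^ 2 + 3 * (x 1 - x 0) ^ 2 + 3 * (x 2 - x 1) ^ 2
    rw [← hsum]; ring
  obtain ⟨hlo, hhi⟩ := neg_sum_log_one_add_bounds u hu_sum hu_abs
  rw [hlog]
  constructor <;> nlinarith [sq_nonneg s]

def oscillatorField {n : ℕ} (p : ℝ) (a c : ZMod n → ℝ) (i : ZMod n) : ℝ :=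
  p * a (i - 1) * (a i + c i) - p * a i * (a (i + 1) + c (i + 1))

lemma sum_oscillatorField_div_eq {n : ℕ} [NeZero n] {p s : ℝ} (hs : s ≠ 0) {a : ZMod n → ℝ}
    (ha : ∀ i, a i ≠ 0) (c : ZMod n → ℝ) :
    ∑ i, oscillatorField p a c i / a i
      = -(p / s * (∑ i, (a i - a (i - 1)) * (s * c i / a i - a i)
          + (∑ i, (a i - a (i - 1)) ^ 2) / 2)) := by
  have hshift : ∀ f : ZMod n → ℝ, (∑ i, f (i + 1) = ∑ i, f i) ∧ ∑ i, f (i - 1) = ∑ i, f i :=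
    fun f => ⟨Equiv.sum_comp (Equiv.addRight 1) f, Equiv.sum_comp (Equiv.subRight 1) f⟩
  -- termwise, the two sides differ by differences of cyclic shifts, which sum to zero
  have hterm : ∀ i, oscillatorField p a c i / a i
      = -(p / s * ((a i - a (i - 1)) * (s * c i / a i - a i) + (a i - a (i - 1)) ^ 2 / 2))
        + p * (a (i - 1) - a (i + 1)) + p * (c i - c (i + 1))
        - p / (2 * s) * (a i ^ 2 - a (i - 1) ^ 2) := by
    intro i
    unfold oscillatorField
    field_simp [ha i]
    ring
  simp only [hterm, sum_add_distrib, sum_sub_distrib, ← mul_sum, sum_neg_distrib, sum_div,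
    (hshift a).1, (hshift a).2, (hshift c).1, (hshift fun i => a i ^ 2).2,
    sub_self, mul_zero, add_zero, sub_zero]

lemma hasDerivAt_log_prod_three {p s : ℝ} (hs : s ≠ 0) {a c : ZMod 3 → ℝ → ℝ}
    (hpos : ∀ i τ, 0 < a i τ) {t : ℝ}
    (hda : ∀ i, HasDerivAt (a i) (oscillatorField p (a · t) (c · t) i) t) :
    HasDerivAt (fun τ => log (a 0 τ * a 1 τ * a 2 τ))
      (-(p / s * (∑ i, (a i t - a (i - 1) t) * (s * c i t / a i t - a i t)
        + (∑ i, (a i t - a (i - 1) t) ^ 2) / 2))) t := by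
  have hlog : (fun τ => log (a 0 τ * a 1 τ * a 2 τ)) = fun τ => ∑ i, log (a i τ) := by
    funext τ
    rw [sum_zmod_three, log_mul (mul_pos (hpos 0 τ) (hpos 1 τ)).ne' (hpos 2 τ).ne',
      log_mul (hpos 0 τ).ne' (hpos 1 τ).ne']
  rw [hlog, ← sum_oscillatorField_div_eq hs (fun i => (hpos i t).ne')]
  exact HasDerivAt.fun_sum fun i _ => (hda i).log (hpos i t).ne'

lemma drift_lower_bound {p s E D K S : ℝ} (hp : 0 < p) (hs : 0 < s) (hE : 0 < E) (hD : 0 ≤ D)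
    (hK : 0 ≤ K) (hS : -(D * K) ≤ S) (hDE : D ^ 2 ≤ s ^ 2 * E ^ 2)
    (hED : s ^ 2 * E ^ 2 ≤ 9 / 4 * D ^ 2) :
    p * s / 9 * E - p / 2 * K ≤ p / s * (S + D ^ 2 / 2) / (2 * E) := by
  have hDE' : D ≤ s * E := by
    rw [← mul_pow] at hDE
    exact (pow_le_pow_iff_left₀ hD (by positivity) two_ne_zero).mp hDE
  have key : -(s * E * K) + 2 / 9 * (s * E) ^ 2 ≤ S + D ^ 2 / 2 := by
    nlinarith [mul_le_mul_of_nonneg_right hDE' hK]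
  rw [le_div_iff₀ (by positivity)]
  calc (p * s / 9 * E - p / 2 * K) * (2 * E)
      = p / s * (-(s * E * K) + 2 / 9 * (s * E) ^ 2) := by field_simp; ring
    _ ≤ p / s * (S + D ^ 2 / 2) := by gcongr

theorem eta_drift_bound_general
    (s p : ℝ) (hs : 0 < s) (hp : 0 < p)
    (a app : ZMod 3 → ℝ → ℝ)
    (hpos : ∀ i t, 0 < a i t)
    (hsum : ∀ t, a 0 t + a 1 t + a 2 t = s)
    (hda : ∀ i t, HasDerivAt (a i)
      (p * a (i - 1) t * (a i t + app i t)
        - p * a i t * (a (i + 1) t + app (i + 1) t)) t) :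
    ∀ t : ℝ,
      Real.sqrt (∑ i : ZMod 3, (a i t - a (i - 1) t) ^ 2) ≤ s / 12 →
      0 < Real.sqrt (Real.log (s ^ 3 / 27) - Real.log (a 0 t * a 1 t * a 2 t)) →
      DifferentiableAt ℝ
          (fun τ => Real.sqrt (Real.log (s ^ 3 / 27) - Real.log (a 0 τ * a 1 τ * a 2 τ))) t ∧
        deriv (fun τ => Real.sqrt (Real.log (s ^ 3 / 27) - Real.log (a 0 τ * a 1 τ * a 2 τ))) t
          ≥ p * s / 9 * Real.sqrt (Real.log (s ^ 3 / 27) - Real.log (a 0 t * a 1 t * a 2 t))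
            - p / 2 * Real.sqrt (∑ i : ZMod 3, (s * app i t / a i t - a i t) ^ 2) := by
  intro t hδ hη
  have hG := sqrt_pos.mp hη
  have hlogφ := hasDerivAt_log_prod_three hs.ne' hpos (fun i => hda i t)
  have hdη := (hlogφ.const_sub (log (s ^ 3 / 27))).sqrt hG.ne'
  refine ⟨hdη.differentiableAt, ?_⟩
  obtain ⟨hlo, hhi⟩ := log_amgm_gap_bounds hs (fun i => hpos i t) (hsum t) hδ
  have hG2 := sq_sqrt hG.le
  have hT2 : √(∑ i, (a i t - a (i - 1) t) ^ 2) ^ 2 = ∑ i, (a i t - a (i - 1) t) ^ 2 :=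
    sq_sqrt (sum_nonneg fun i _ => sq_nonneg _)
  rw [hdη.deriv, neg_neg, ge_iff_le, ← hT2]
  exact drift_lower_bound hp hs hη (sqrt_nonneg _) (sqrt_nonneg _)
    (neg_mul_sqrt_le_sum_mul _ _ _) (by rw [hG2, hT2]; exact hlo) (by rw [hG2, hT2]; exact hhi)

/-- Along a trajectory of the source-free oscillator dynamics, at every time
with `δ(t) ≤ s/12` and `η(t) > 0`, the potential `η = √(ln(s³/27) − ln(a₁a₂a₃))`
is differentiable and `η'(t) ≥ (ps/9)η(t) − (p/2)κ(t)`. -/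
theorem eta_drift_bound
    (s p : ℝ) (hs : 0 < s) (hs1 : s ≤ 1) (hp : 0 < p)
    (a app : ZMod 3 → ℝ → ℝ)
    (hpos : ∀ i t, 0 < a i t)
    (hsum : ∀ t, a 0 t + a 1 t + a 2 t = s)
    (happ : ∀ i t, 0 ≤ app i t ∧ app i t ≤ a i t)
    (hda : ∀ i t, HasDerivAt (a i)
      (p * a (i - 1) t * (a i t + app i t)
        - p * a i t * (a (i + 1) t + app (i + 1) t)) t)
    (hdapp : ∀ i t, HasDerivAt (app i) ((a i t) ^ 2 - s * app i t) t) :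
    ∀ t : ℝ,
      Real.sqrt (∑ i : ZMod 3, (a i t - a (i - 1) t) ^ 2) ≤ s / 12 →
      0 < Real.sqrt (Real.log (s ^ 3 / 27) - Real.log (a 0 t * a 1 t * a 2 t)) →
      DifferentiableAt ℝ
          (fun τ => Real.sqrt (Real.log (s ^ 3 / 27) - Real.log (a 0 τ * a 1 τ * a 2 τ))) t ∧
        deriv (fun τ => Real.sqrt (Real.log (s ^ 3 / 27) - Real.log (a 0 τ * a 1 τ * a 2 τ))) t
          ≥ p * s / 9 * Real.sqrt (Real.log (s ^ 3 / 27) - Real.log (a 0 t * a 1 t * a 2 t))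
            - p / 2 * Real.sqrt (∑ i : ZMod 3, (s * app i t / a i t - a i t) ^ 2) :=
  eta_drift_bound_general s p hs hp a app hpos hsum hda
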